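/- Let n ≥ 1, let (C_j)_{j=0}^{n} be a Toeplitz nonnegative definite sequence of complex q×q matrices with rank T_n ≤ n, and let μ be any positive semidefinite q×q matrix Borel measure on the unit circle 𝕋 whose j-th Fourier coefficient ∫_𝕋 ζ^{−j} μ(dζ) equals C_j for all 0 ≤ j ≤ n. Then there exists a subset N of 𝕋 with at most nq elements such that μ(𝕋 \ N) = 0 (the zero matrix). -/

import Mathlib

/-!
Write `E(ζ) = [I, ζI, …, ζⁿI]`. Since `ζ⁻¹ = conj ζ` on the circle, the Fourier conditions say
`T_n = ∫ E(ζ)ᴴ g(ζ) E(ζ) dν`. For `v ∈ ker T_n` the nonnegative function `(E v)ᴴ g (E v)` then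
has integral zero, so `g(ζ) E(ζ) v = 0` for a.e. `ζ`, and by finite dimensionality simultaneously
for all `v ∈ ker T_n`. Hence `g(ζ) = 0` a.e. outside the set of points where `E(ζ)` fails to map
`ker T_n` onto `ℂ^q`. At each such point some `u ≠ 0` makes the row `uᵀ E(ζ)` vanish on `ker T_n`;
rows of this shape at distinct points are linearly independent (Vandermonde), so there are at
most `rank T_n ≤ n` such points.
-/
open Matrix MeasureTheory Metric Filter Topology
open scoped ComplexOrder

/-- The block Toeplitz matrix `T_n = [C_{j-k}]_{j,k=0}^n`, with `C_{-j} := C_jᴴ`,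
indexed so that block `(j,k)` sits at `((a,j),(b,k))`. -/
def blockToeplitz {ι : Type*} (C : ℕ → Matrix ι ι ℂ) (n : ℕ) :
    Matrix (ι × Fin (n + 1)) (ι × Fin (n + 1)) ℂ :=
  fun x y =>
    if (y.2 : ℕ) ≤ (x.2 : ℕ) then C ((x.2 : ℕ) - (y.2 : ℕ)) x.1 y.1
    else (C ((y.2 : ℕ) - (x.2 : ℕ)))ᴴ x.1 y.1

/-- A sequence `(C_j)_{j=0}^κ` is Toeplitz nonnegative definite if each block
Toeplitz matrix `T_n`, `n ≤ κ`, is positive semidefinite. -/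
def IsTNND {ι : Type*} [Fintype ι] (κ : ℕ∞) (C : ℕ → Matrix ι ι ℂ) : Prop :=
  ∀ n : ℕ, (n : ℕ∞) ≤ κ → (blockToeplitz C n).PosSemidef

namespace Matrix

variable {K : Type*} [Field K]

lemma rank_le_rank_of_ker_le {m p ι : Type*} [Fintype ι] {A : Matrix m ι K} {B : Matrix p ι K}
    (h : ∀ v, A *ᵥ v = 0 → B *ᵥ v = 0) : B.rank ≤ A.rank := by
  have hker : LinearMap.ker A.mulVecLin ≤ LinearMap.ker B.mulVecLin := h
  have hA := LinearMap.finrank_range_add_finrank_ker A.mulVecLin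
  have hB := LinearMap.finrank_range_add_finrank_ker B.mulVecLin
  have := Submodule.finrank_mono hker
  simp only [rank]
  omega

/-- The block row `E(z) = [I, z I, …, zⁿ I]`, so that `E(z) *ᵥ v = ∑ₖ zᵏ v(·, k)`. -/
def powerBlockRow (ι : Type*) [DecidableEq ι] (n : ℕ) (z : K) : Matrix ι (ι × Fin (n + 1)) K :=
  of fun a p => if p.1 = a then z ^ (p.2 : ℕ) else 0

variable {ι m : Type*} [Fintype ι] [DecidableEq ι] {n : ℕ}

@[simp]
lemma vecMul_powerBlockRow_apply (u : ι → K) (z : K) (p : ι × Fin (n + 1)) :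
    (u ᵥ* powerBlockRow ι n z) p = u p.1 * z ^ (p.2 : ℕ) := by
  simp [powerBlockRow, vecMul, dotProduct]

lemma linearIndependent_vecMul_powerBlockRow {r : ℕ} (hr : r ≤ n + 1) {x : Fin r → K}
    (hx : Function.Injective x) {u : Fin r → ι → K} (hu : ∀ i, u i ≠ 0) :
    LinearIndependent K fun i => u i ᵥ* powerBlockRow ι n (x i) := by
  rw [Fintype.linearIndependent_iff]
  intro c hc i
  obtain ⟨a, ha⟩ := Function.ne_iff.mp (hu i)
  have hca : (fun j => c j * u j a) = 0 := by
    refine eq_zero_of_forall_pow_sum_mul_pow_eq_zero hx fun k => ?_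
    simpa [Finset.sum_apply, mul_assoc] using congrFun hc (a, Fin.castLE hr k)
  exact (mul_eq_zero.mp (congrFun hca i)).resolve_right ha

lemma powerBlockRow_conjTranspose_mul_mul_apply {ζ : ℂ} (hζ : ‖ζ‖ = 1) (A : Matrix ι ι ℂ)
    (a b : ι) (j k : Fin (n + 1)) :
    ((powerBlockRow ι n ζ)ᴴ * A * powerBlockRow ι n ζ) (a, j) (b, k) =
      ζ ^ ((k : ℤ) - j) * A a b := by
  have hζ0 : ζ ≠ 0 := by rintro rfl; simp at hζ
  simp only [powerBlockRow, mul_apply, conjTranspose_apply, of_apply, RCLike.star_def,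
    apply_ite (starRingEnd ℂ), map_pow, ← Complex.inv_eq_conj hζ, map_zero, ite_mul, zero_mul,
    Finset.sum_ite_eq, Finset.mem_univ, if_true, mul_ite, mul_zero, zpow_sub₀ hζ0, zpow_natCast]
  ring

/-- The points `z` at which `powerBlockRow ι n z` does not map `ker T` onto `ι → K`. -/
def degeneratePoints (T : Matrix m (ι × Fin (n + 1)) K) : Set K :=
  {z | ∃ u ≠ 0, ∀ v, T *ᵥ v = 0 → u ⬝ᵥ powerBlockRow ι n z *ᵥ v = 0}

variable {T : Matrix m (ι × Fin (n + 1)) K}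

lemma eq_zero_of_notMem_degeneratePoints {z : K} (hz : z ∉ degeneratePoints T)
    {A : Matrix ι ι K} (hA : ∀ v, T *ᵥ v = 0 → A *ᵥ (powerBlockRow ι n z *ᵥ v) = 0) :
    A = 0 := by
  ext a b
  by_contra hab
  exact hz ⟨A a, fun h => hab (congrFun h b), fun v hv => congrFun (hA v hv) a⟩

lemma le_rank_of_injective_mem_degeneratePoints {r : ℕ} (hr : r ≤ n + 1) {x : Fin r → K}
    (hx : Function.Injective x) (hxT : ∀ i, x i ∈ degeneratePoints T) : r ≤ T.rank := by
  choose u hu hker using hxT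
  let W : Matrix (Fin r) (ι × Fin (n + 1)) K := of fun i => u i ᵥ* powerBlockRow ι n (x i)
  have hW : W.rank = r := by
    simpa using (linearIndependent_vecMul_powerBlockRow hr hx hu).rank_matrix (M := W)
  rw [← hW]
  exact rank_le_rank_of_ker_le fun v hv => funext fun i =>
    (dotProduct_mulVec _ _ _).symm.trans (hker i v hv)

lemma encard_degeneratePoints_le_rank (hT : T.rank ≤ n) :
    (degeneratePoints T).encard ≤ T.rank := by
  by_contra! hlt
  obtain ⟨t, hts, htcard⟩ := Set.exists_subset_encard_eq (Order.add_one_le_of_lt hlt)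
  have htfin : t.Finite := Set.finite_of_encard_eq_coe htcard
  rw [htfin.encard_eq_coe_toFinset_card] at htcard
  let e := htfin.toFinset.equivFinOfCardEq (by exact_mod_cast htcard)
  have := le_rank_of_injective_mem_degeneratePoints (Nat.succ_le_succ hT)
    (x := fun i => (e.symm i : K)) (fun i j hij => e.symm.injective (Subtype.ext hij))
    (fun i => hts (htfin.mem_toFinset.mp (e.symm i).2))
  omega

end Matrix

section

variable {X : Type*} [MeasurableSpace X] {μ : Measure X} {m : Type*} [Fintype m]

lemma integrable_dotProduct_mulVec {M : X → Matrix m m ℂ}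
    (hM : ∀ i j, Integrable (fun x => M x i j) μ) (w v : m → ℂ) :
    Integrable (fun x => w ⬝ᵥ M x *ᵥ v) μ := by
  simp only [dotProduct, mulVec]
  fun_prop

lemma dotProduct_mulVec_eq_integral {M : X → Matrix m m ℂ} {T : Matrix m m ℂ}
    (hM : ∀ i j, Integrable (fun x => M x i j) μ) (hT : ∀ i j, T i j = ∫ x, M x i j ∂μ)
    (w v : m → ℂ) : w ⬝ᵥ T *ᵥ v = ∫ x, w ⬝ᵥ M x *ᵥ v ∂μ := by
  simp only [dotProduct, mulVec, hT]
  rw [integral_finsetSum _ fun i _ => by fun_prop]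
  refine Finset.sum_congr rfl fun i _ => ?_
  rw [integral_const_mul, integral_finsetSum _ fun j _ => by fun_prop]
  simp only [integral_mul_const]

lemma ae_mulVec_eq_zero_of_integral_eq_zero {A : X → Matrix m m ℂ}
    (hA : ∀ᵐ x ∂μ, (A x).PosSemidef) {w : X → m → ℂ}
    (hint : Integrable (fun x => star (w x) ⬝ᵥ A x *ᵥ w x) μ)
    (h0 : ∫ x, star (w x) ⬝ᵥ A x *ᵥ w x ∂μ = 0) : ∀ᵐ x ∂μ, A x *ᵥ w x = 0 := by
  set f := fun x => star (w x) ⬝ᵥ A x *ᵥ w x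
  have hf_nonneg : ∀ᵐ x ∂μ, 0 ≤ f x := hA.mono fun x hx => hx.dotProduct_mulVec_nonneg _
  have hre_zero : ∫ x, (f x).re ∂μ = 0 := by
    simpa [h0] using integral_re hint
  have hre_ae := (integral_eq_zero_iff_of_nonneg_ae
    (hf_nonneg.mono fun x hx => (Complex.nonneg_iff.mp hx).1) hint.re).mp hre_zero
  filter_upwards [hA, hf_nonneg, hre_ae] with x hAx hfx hrex
  have hfx0 : f x = 0 := by
    rw [Complex.eq_re_of_ofReal_le (r := 0) (z := f x) (by exact_mod_cast hfx)]
    simpa using hrex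
  exact (hAx.dotProduct_mulVec_zero_iff _).mp hfx0

lemma ae_mulVec_mulVec_eq_zero_of_mulVec_eq_zero {p : Type*} [Fintype p]
    {A : X → Matrix m m ℂ} {B : X → Matrix m p ℂ} {T : Matrix p p ℂ}
    (hA : ∀ᵐ x ∂μ, (A x).PosSemidef)
    (hM : ∀ i j, Integrable (fun x => ((B x)ᴴ * A x * B x) i j) μ)
    (hT : ∀ i j, T i j = ∫ x, ((B x)ᴴ * A x * B x) i j ∂μ) {v : p → ℂ} (hv : T *ᵥ v = 0) :
    ∀ᵐ x ∂μ, A x *ᵥ (B x *ᵥ v) = 0 := by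
  have hquad : ∀ x, star (B x *ᵥ v) ⬝ᵥ A x *ᵥ (B x *ᵥ v) =
      star v ⬝ᵥ ((B x)ᴴ * A x * B x) *ᵥ v := fun x => by
    simp only [star_mulVec, ← mulVec_mulVec, dotProduct_mulVec, vecMul_vecMul]
  refine ae_mulVec_eq_zero_of_integral_eq_zero hA ?_ ?_
  · simpa only [hquad] using integrable_dotProduct_mulVec hM (star v) v
  · simp only [hquad, ← dotProduct_mulVec_eq_integral hM hT, hv, dotProduct_zero]

lemma Submodule.ae_le_ker_iff {K V W : Type*} [Field K] [AddCommGroup V] [Module K V]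
    [FiniteDimensional K V] [AddCommGroup W] [Module K W] {S : Submodule K V}
    {L : X → V →ₗ[K] W} :
    (∀ᵐ x ∂μ, S ≤ LinearMap.ker (L x)) ↔ ∀ v ∈ S, ∀ᵐ x ∂μ, L x v = 0 := by
  refine ⟨fun h v hv => h.mono fun x hx => hx hv, fun h => ?_⟩
  let b := Module.finBasis K S
  filter_upwards [ae_all_iff.2 fun i => h _ (b i).2] with x hx v hv
  have hLS : L x ∘ₗ S.subtype = 0 := b.ext fun i => hx i
  exact LinearMap.congr_fun hLS ⟨v, hv⟩

end

section

variable {ν : Measure ℂ}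

lemma integrable_zpow_mul_of_ae_norm_eq_one (hν : ∀ᵐ ζ ∂ν, ‖ζ‖ = 1) {f : ℂ → ℂ}
    (hf : Integrable f ν) (k : ℤ) : Integrable (fun ζ => ζ ^ k * f ζ) ν :=
  hf.bdd_mul (c := 1) (by fun_prop) (hν.mono fun ζ hζ => by simp [hζ])

lemma blockToeplitz_apply_eq_integral {ι : Type*} {C : ℕ → Matrix ι ι ℂ} {n : ℕ}
    {g : ℂ → Matrix ι ι ℂ} (hν : ∀ᵐ ζ ∂ν, ‖ζ‖ = 1) (hg : ∀ᵐ ζ ∂ν, (g ζ).IsHermitian)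
    (hFourier : ∀ j : ℕ, j ≤ n → ∀ a b, ∫ ζ, ζ ^ (-(j : ℤ)) * g ζ a b ∂ν = C j a b)
    (a b : ι) (j k : Fin (n + 1)) :
    blockToeplitz C n (a, j) (b, k) = ∫ ζ, ζ ^ ((k : ℤ) - j) * g ζ a b ∂ν := by
  unfold blockToeplitz
  split_ifs with hkj
  · rw [← hFourier _ (by omega) a b]
    push_cast [hkj]
    ring_nf
  · rw [conjTranspose_apply, ← hFourier _ (by omega) b a, RCLike.star_def, ← integral_conj]
    refine integral_congr_ae ?_
    filter_upwards [hν, hg] with ζ hζ hgζ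
    rw [map_mul, map_zpow₀, ← Complex.inv_eq_conj hζ, ← hgζ.apply a b]
    push_cast [(not_le.mp hkj).le]
    rw [_root_.inv_zpow', neg_neg, RCLike.star_def]

variable {ι : Type*} [Fintype ι] [DecidableEq ι] {C : ℕ → Matrix ι ι ℂ} {n : ℕ}
  {g : ℂ → Matrix ι ι ℂ}

lemma ae_eq_zero_of_notMem_degeneratePoints (hν : ∀ᵐ ζ ∂ν, ‖ζ‖ = 1)
    (hg : ∀ a b, Integrable (fun ζ => g ζ a b) ν) (hpsd : ∀ᵐ ζ ∂ν, (g ζ).PosSemidef)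
    (hFourier : ∀ j : ℕ, j ≤ n → ∀ a b, ∫ ζ, ζ ^ (-(j : ℤ)) * g ζ a b ∂ν = C j a b) :
    ∀ᵐ ζ ∂ν, ζ ∉ degeneratePoints (blockToeplitz C n) → g ζ = 0 := by
  set E : ℂ → Matrix ι (ι × Fin (n + 1)) ℂ := powerBlockRow ι n
  have hEntry (a b : ι) (j k : Fin (n + 1)) : (fun ζ => ζ ^ ((k : ℤ) - j) * g ζ a b) =ᵐ[ν]
      fun ζ => ((E ζ)ᴴ * g ζ * E ζ) (a, j) (b, k) :=
    hν.mono fun ζ hζ => (powerBlockRow_conjTranspose_mul_mul_apply hζ _ a b j k).symm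
  have hT (x y) : blockToeplitz C n x y = ∫ ζ, ((E ζ)ᴴ * g ζ * E ζ) x y ∂ν :=
    (blockToeplitz_apply_eq_integral hν (hpsd.mono fun _ h => h.1) hFourier _ _ _ _).trans
      (integral_congr_ae (hEntry _ _ _ _))
  have hInt (x y) : Integrable (fun ζ => ((E ζ)ᴴ * g ζ * E ζ) x y) ν :=
    (integrable_zpow_mul_of_ae_norm_eq_one hν (hg _ _) _).congr (hEntry _ _ _ _)
  have hker : ∀ᵐ ζ ∂ν,
      LinearMap.ker (blockToeplitz C n).mulVecLin ≤ LinearMap.ker (g ζ * E ζ).mulVecLin :=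
    Submodule.ae_le_ker_iff.2 fun v hv =>
      (ae_mulVec_mulVec_eq_zero_of_mulVec_eq_zero hpsd hInt hT hv).mono fun ζ h => by
        simpa [mulVec_mulVec] using h
  filter_upwards [hker] with ζ hkerζ hζ
  exact eq_zero_of_notMem_degeneratePoints hζ fun v hv => by
    simpa [mulVec_mulVec] using hkerζ hv

end

theorem concentrated_of_low_rank_general (q n : ℕ)
    (C : ℕ → Matrix (Fin q) (Fin q) ℂ)
    (hrank : (blockToeplitz C n).rank ≤ n)
    (ν : Measure ℂ) (hν : ν ((sphere (0 : ℂ) 1)ᶜ) = 0)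
    (g : ℂ → Matrix (Fin q) (Fin q) ℂ)
    (hg : ∀ a b, Integrable (fun z => g z a b) ν)
    (hpsd : ∀ᵐ z ∂ν, (g z).PosSemidef)
    (hFourier : ∀ j : ℕ, j ≤ n → ∀ a b,
      (∫ ζ, ζ ^ (-(j : ℤ)) * g ζ a b ∂ν) = C j a b) :
    ∃ N : Finset ℂ, ↑N ⊆ sphere (0 : ℂ) 1 ∧ N.card ≤ n * q ∧
      ∀ a b, (∫ ζ in (↑N : Set ℂ)ᶜ, g ζ a b ∂ν) = 0 := by
  classical
  set T := blockToeplitz C n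
  have hsphere : ∀ᵐ ζ ∂ν, ζ ∈ sphere (0 : ℂ) 1 := mem_ae_iff.2 hν
  have hzero := ae_eq_zero_of_notMem_degeneratePoints
    (hsphere.mono fun ζ hζ => mem_sphere_zero_iff_norm.1 hζ) hg hpsd hFourier
  have hcard := encard_degeneratePoints_le_rank hrank
  have hfin : (degeneratePoints T).Finite := Set.finite_of_encard_le_coe hcard
  rw [hfin.encard_eq_coe_toFinset_card, Nat.cast_le] at hcard
  refine ⟨hfin.toFinset.filter (· ∈ sphere 0 1), fun z hz => (Finset.mem_filter.1 hz).2, ?_,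
    fun a b => setIntegral_eq_zero_of_ae_eq_zero ?_⟩
  · calc _ ≤ hfin.toFinset.card := Finset.card_filter_le _ _
      _ ≤ T.rank := hcard
      _ ≤ n * q := by
        rcases q.eq_zero_or_pos with rfl | hq
        · simpa using rank_le_card_width T
        · exact hrank.trans (Nat.le_mul_of_pos_right n hq)
  · filter_upwards [hsphere, hzero] with ζ hζ hgζ hN
    rw [hgζ fun h => hN (Finset.mem_filter.2 ⟨hfin.mem_toFinset.2 h, hζ⟩)]
    rfl

/-- If `(C_j)_{j=0}^n` (`n ≥ 1`) is Toeplitz nonnegative definite with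
`rank T_n ≤ n` and `μ` is a positive semidefinite `q×q` matrix measure on the unit
circle (encoded by a finite positive measure `ν` supported on the circle and a
`ν`-a.e. positive semidefinite integrable matrix density `g`) whose `j`-th Fourier
coefficient equals `C_j` for `0 ≤ j ≤ n`, then `μ` is concentrated on at most `n·q`
points of the circle. -/
theorem concentrated_of_low_rank (q n : ℕ) (hn : 1 ≤ n)
    (C : ℕ → Matrix (Fin q) (Fin q) ℂ)
    (hC : IsTNND (n : ℕ∞) C)
    (hrank : (blockToeplitz C n).rank ≤ n)
    (ν : Measure ℂ) [IsFiniteMeasure ν] (hν : ν ((sphere (0 : ℂ) 1)ᶜ) = 0)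
    (g : ℂ → Matrix (Fin q) (Fin q) ℂ)
    (hg : ∀ a b, Integrable (fun z => g z a b) ν)
    (hpsd : ∀ᵐ z ∂ν, (g z).PosSemidef)
    (hFourier : ∀ j : ℕ, j ≤ n → ∀ a b,
      (∫ ζ, ζ ^ (-(j : ℤ)) * g ζ a b ∂ν) = C j a b) :
    ∃ N : Finset ℂ, ↑N ⊆ sphere (0 : ℂ) 1 ∧ N.card ≤ n * q ∧
      ∀ a b, (∫ ζ in (↑N : Set ℂ)ᶜ, g ζ a b ∂ν) = 0 :=
  concentrated_of_low_rank_general q n C hrank ν hν g hg hpsd hFourier
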